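/- Let Λ be the natural order of a nonassociative cyclic division algebra A = (K/F,σ,d) of degree m over a number field F, with d ∈ O_K^×. Then every nonzero two-sided ideal J of Λ satisfies J ∩ O_K ≠ 0. -/

import Mathlib

/-- An abstract presentation of the skew polynomial ring `S[t;σ,δ]`:
a ring `R` together with an embedding of `S`, a variable `t` satisfying the
commutation rule `t·a = σ(a)·t + δ(a)`, such that the `t^i` form a basis of `R`
as a left `S`-module (encoded by the coefficient equivalence). -/
structure SkewPolyRing (S : Type*) (R : Type*) [Ring S] [Ring R]
    (σ : S →+* S) (δ : S →+ S) : Type _ where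
  ι : S →+* R
  t : R
  t_comm : ∀ a : S, t * ι a = ι (σ a) * t + ι (δ a)
  coeff : R ≃+ (ℕ →₀ S)
  coeff_symm : ∀ p : ℕ →₀ S, coeff.symm p = p.sum fun i a => ι a * t ^ i

namespace SkewPolyRing

variable {S R : Type*} [Ring S] [Ring R] {σ : S →+* S} {δ : S →+ S}

/-- `g` has degree `< m`. -/
def degLT (P : SkewPolyRing S R σ δ) (g : R) (m : ℕ) : Prop :=
  ∀ i, m ≤ i → P.coeff g i = 0

/-- The degree of a skew polynomial (with `deg 0 = 0` by convention). -/
noncomputable def deg (P : SkewPolyRing S R σ δ) (g : R) : ℕ :=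
  (P.coeff g).support.sup id

/-- `f` is monic of degree `m`. -/
def MonicDeg (P : SkewPolyRing S R σ δ) (f : R) (m : ℕ) : Prop :=
  P.coeff f m = 1 ∧ ∀ i, m < i → P.coeff f i = 0

/-- `modr` computes a remainder of right division by `f`. -/
def IsModr (P : SkewPolyRing S R σ δ) (f : R) (m : ℕ) (modr : R → R) : Prop :=
  ∀ g : R, P.degLT (modr g) m ∧ ∃ q : R, g = q * f + modr g

end SkewPolyRing

/-! Since `σ` generates `Gal(K/F)` of order `m`, no `σᵏ` with `0 < k < m` fixes `O_K`. Take a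
nonzero `x ∈ J` of least degree `n < m`. For every `a ∈ O_K` the element `x a − σⁿ(a) x` of `J`
has degree `< n`, so it vanishes. Comparing coefficients, `xᵢ σⁱ(a) = σⁿ(a) xᵢ`, so `xᵢ ≠ 0` for
some `i < n` would make `σⁿ⁻ⁱ` trivial on `O_K`; hence `x = c tⁿ`. If `n > 0`, then
`x t^(m−n) = c t^m ≡ c d (mod t^m − d)` lies in `J`, and `c d ≠ 0` because `d` is a unit. -/

namespace SkewPolyRing

section General

variable {S R : Type*} [Ring S] [Ring R] {σ : S →+* S} {δ : S →+ S} (P : SkewPolyRing S R σ δ)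

theorem symm_single (i : ℕ) (a : S) :
    P.coeff.symm (Finsupp.single i a) = P.ι a * P.t ^ i := by
  rw [P.coeff_symm, Finsupp.sum_single_index]
  simp

theorem coeff_ι_mul_tpow (i : ℕ) (a : S) : P.coeff (P.ι a * P.t ^ i) = Finsupp.single i a := by
  rw [← P.symm_single, AddEquiv.apply_symm_apply]

theorem coeff_ι (a : S) : P.coeff (P.ι a) = Finsupp.single 0 a := by
  simpa using P.coeff_ι_mul_tpow 0 a

theorem coeff_tpow (k : ℕ) : P.coeff (P.t ^ k) = Finsupp.single k 1 := by
  simpa using P.coeff_ι_mul_tpow k 1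

@[elab_as_elim]
theorem induction_on {motive : R → Prop} (g : R) (zero : motive 0)
    (add : ∀ g h, motive g → motive h → motive (g + h))
    (monomial : ∀ i a, motive (P.ι a * P.t ^ i)) : motive g := by
  rw [← P.coeff.symm_apply_apply g]
  induction P.coeff g using Finsupp.induction with
  | zero => rwa [map_zero]
  | single_add i a q _ _ ih => rw [map_add, P.symm_single]; exact add _ _ (monomial i a) ih

theorem coeff_mul_tpow (k : ℕ) (g : R) (i : ℕ) :
    P.coeff (g * P.t ^ k) (i + k) = P.coeff g i := by
  induction g using P.induction_on with
  | zero => simp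
  | add g h hg hh =>
    rw [add_mul, P.coeff.map_add, P.coeff.map_add, Finsupp.add_apply, Finsupp.add_apply, hg, hh]
  | monomial j a =>
    simp only [mul_assoc, ← pow_add, P.coeff_ι_mul_tpow, Finsupp.single_apply, add_left_inj]

theorem coeff_ι_mul (b : S) (g : R) (i : ℕ) :
    P.coeff (P.ι b * g) i = b * P.coeff g i := by
  induction g using P.induction_on with
  | zero => simp
  | add g h hg hh =>
    rw [mul_add, P.coeff.map_add, P.coeff.map_add, Finsupp.add_apply, Finsupp.add_apply, hg, hh,
      mul_add]
  | monomial j a =>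
    rw [← mul_assoc, ← map_mul, P.coeff_ι_mul_tpow, P.coeff_ι_mul_tpow]
    rcases eq_or_ne i j with rfl | h
    · simp
    · simp [Finsupp.single_eq_of_ne h]

theorem coeff_eq_zero_of_deg_lt {g : R} {i : ℕ} (h : P.deg g < i) : P.coeff g i = 0 := by
  by_contra hi
  exact h.not_ge (Finset.le_sup (f := id) (Finsupp.mem_support_iff.mpr hi))

theorem coeff_deg_ne_zero {g : R} (hg : g ≠ 0) : P.coeff g (P.deg g) ≠ 0 := by
  obtain ⟨b, hb, hbs⟩ := Finset.exists_mem_eq_sup _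
    (Finsupp.support_nonempty_iff.mpr (P.coeff.map_ne_zero_iff.mpr hg)) id
  rw [deg, hbs]
  exact Finsupp.mem_support_iff.mp hb

theorem degLT_deg_succ (g : R) : P.degLT g (P.deg g + 1) :=
  fun _ hi => P.coeff_eq_zero_of_deg_lt hi

theorem deg_lt_of_degLT {g : R} {m : ℕ} (hg : g ≠ 0) (h : P.degLT g m) : P.deg g < m :=
  lt_of_not_ge fun hm => P.coeff_deg_ne_zero hg (h _ hm)

theorem degLT_ι {m : ℕ} (hm : 0 < m) (a : S) : P.degLT (P.ι a) m := fun i hi => by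
  rw [P.coeff_ι, Finsupp.single_eq_of_ne (by omega)]

theorem degLT_tpow {k m : ℕ} (hk : k < m) : P.degLT (P.t ^ k) m := fun i hi => by
  rw [P.coeff_tpow, Finsupp.single_eq_of_ne (by omega)]

theorem degLT_ι_mul {g : R} {m : ℕ} (h : P.degLT g m) (b : S) : P.degLT (P.ι b * g) m :=
  fun i hi => by rw [P.coeff_ι_mul, h i hi, mul_zero]

variable {P} in
theorem degLT.sub {g h : R} {m : ℕ} (hg : P.degLT g m) (hh : P.degLT h m) :
    P.degLT (g - h) m :=
  fun i hi => by rw [map_sub, Finsupp.sub_apply, hg i hi, hh i hi, sub_zero]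

end General

section Untwisted

variable {S R : Type*} [Ring S] [Ring R] {σ : S →+* S} (P : SkewPolyRing S R σ 0)

theorem tpow_mul_ι (k : ℕ) (a : S) : P.t ^ k * P.ι a = P.ι (σ^[k] a) * P.t ^ k := by
  induction k with
  | zero => simp
  | succ k ih =>
    rw [pow_succ', mul_assoc, ih, ← mul_assoc, P.t_comm, AddMonoidHom.zero_apply, map_zero,
      add_zero, Function.iterate_succ_apply', mul_assoc, ← pow_succ']

theorem coeff_mul_ι (a : S) (g : R) (i : ℕ) :
    P.coeff (g * P.ι a) i = P.coeff g i * σ^[i] a := by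
  induction g using P.induction_on with
  | zero => simp
  | add g h hg hh =>
    rw [add_mul, P.coeff.map_add, P.coeff.map_add, Finsupp.add_apply, Finsupp.add_apply, hg, hh,
      add_mul]
  | monomial j b =>
    rw [mul_assoc, P.tpow_mul_ι, ← mul_assoc, ← map_mul, P.coeff_ι_mul_tpow, P.coeff_ι_mul_tpow]
    rcases eq_or_ne i j with rfl | h
    · simp
    · simp [Finsupp.single_eq_of_ne h]

theorem degLT_mul_ι {g : R} {m : ℕ} (h : P.degLT g m) (a : S) : P.degLT (g * P.ι a) m :=
  fun i hi => by rw [P.coeff_mul_ι, h i hi, zero_mul]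

/-- Right multiplication by the monic `t^m − d` raises the degree by `m`. -/
theorem eq_zero_of_degLT_mul {m : ℕ} (hm : 0 < m) (d : S) {q : R}
    (h : P.degLT (q * (P.t ^ m - P.ι d)) m) : q = 0 := by
  by_contra hq
  have htop : P.coeff q (P.deg q + m) = 0 := P.coeff_eq_zero_of_deg_lt (by omega)
  have hcoeff := h (P.deg q + m) (Nat.le_add_left m _)
  rw [mul_sub, map_sub, Finsupp.sub_apply, P.coeff_mul_tpow, P.coeff_mul_ι, htop, zero_mul,
    sub_zero] at hcoeff
  exact P.coeff_deg_ne_zero hq hcoeff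

variable {P}

theorem IsModr.eq_of_eq_mul_add {m : ℕ} (hm : 0 < m) {d : S} {modr : R → R}
    (hmodr : P.IsModr (P.t ^ m - P.ι d) m modr) {g q r : R}
    (hg : g = q * (P.t ^ m - P.ι d) + r) (hr : P.degLT r m) : modr g = r := by
  obtain ⟨hlt, q', hq'⟩ := hmodr g
  have hdiff : (q - q') * (P.t ^ m - P.ι d) = modr g - r := by
    rw [sub_mul, sub_eq_sub_iff_add_eq_add, ← hg, add_comm, ← hq']
  have hq : q - q' = 0 := P.eq_zero_of_degLT_mul hm d (hdiff ▸ hlt.sub hr)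
  rwa [hq, zero_mul, eq_comm, sub_eq_zero] at hdiff

theorem IsModr.eq_self {m : ℕ} (hm : 0 < m) {d : S} {modr : R → R}
    (hmodr : P.IsModr (P.t ^ m - P.ι d) m modr) {g : R} (hg : P.degLT g m) : modr g = g :=
  hmodr.eq_of_eq_mul_add hm (by rw [zero_mul, zero_add]) hg

end Untwisted

theorem eq_ι_mul_tpow_of_mul_ι_eq {S R : Type*} [CommRing S] [IsDomain S] [Ring R]
    {σ : S →+* S} (P : SkewPolyRing S R σ 0) (hσ : Function.Injective σ) {n : ℕ}
    (hmov : ∀ k, 0 < k → k ≤ n → ∃ a, σ^[k] a ≠ a) {x : R} (hx : P.degLT x (n + 1))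
    (hsemi : ∀ a, x * P.ι a = P.ι (σ^[n] a) * x) : x = P.ι (P.coeff x n) * P.t ^ n := by
  apply P.coeff.injective
  rw [← P.symm_single, AddEquiv.apply_symm_apply]
  ext j
  rcases lt_trichotomy j n with hj | rfl | hj
  · rw [Finsupp.single_eq_of_ne (by omega)]
    obtain ⟨a, ha⟩ := hmov (n - j) (by omega) (by omega)
    by_contra hcj
    have hcoeff := congrArg (P.coeff · j) (hsemi a)
    simp only [P.coeff_mul_ι, P.coeff_ι_mul, mul_comm (σ^[n] a)] at hcoeff
    apply ha
    apply (hσ.iterate j)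
    rw [← Function.iterate_add_apply, Nat.add_sub_cancel' hj.le]
    exact (mul_left_cancel₀ hcj hcoeff).symm
  · rw [Finsupp.single_eq_same]
  · rw [hx j hj, Finsupp.single_eq_of_ne (by omega)]

/-- `J` is a two-sided ideal of the Petit algebra `R_m = {g | deg g < m}`, whose product is
`g ∘ h = modr (g * h)`. -/
structure IsPetitIdeal {S R : Type*} [Ring S] [Ring R] {σ : S →+* S} {δ : S →+ S}
    (P : SkewPolyRing S R σ δ) (m : ℕ) (modr : R → R) (J : AddSubgroup R) : Prop where
  degLT : ∀ x ∈ J, P.degLT x m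
  mul_mem_left : ∀ x ∈ J, ∀ l : R, P.degLT l m → modr (l * x) ∈ J
  mul_mem_right : ∀ x ∈ J, ∀ l : R, P.degLT l m → modr (x * l) ∈ J

namespace IsPetitIdeal

variable {S R : Type*} [Ring R] {m : ℕ} {modr : R → R} {J : AddSubgroup R}

section Ring

variable [Ring S] {σ : S →+* S} {P : SkewPolyRing S R σ 0} (hJ : P.IsPetitIdeal m modr J)
  {d : S} (hmodr : P.IsModr (P.t ^ m - P.ι d) m modr) (hm : 0 < m)
include hJ hmodr hm

theorem mul_ι_mem {x : R} (hx : x ∈ J) (a : S) : x * P.ι a ∈ J := by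
  have := hJ.mul_mem_right x hx _ (P.degLT_ι hm a)
  rwa [hmodr.eq_self hm (P.degLT_mul_ι (hJ.degLT x hx) a)] at this

theorem ι_mul_mem {x : R} (hx : x ∈ J) (b : S) : P.ι b * x ∈ J := by
  have := hJ.mul_mem_left x hx _ (P.degLT_ι hm b)
  rwa [hmodr.eq_self hm (P.degLT_ι_mul (hJ.degLT x hx) b)] at this

theorem ι_mul_mem_of_ι_mul_tpow_mem {n : ℕ} (hn : 0 < n) (hnm : n < m) {c : S}
    (hc : P.ι c * P.t ^ n ∈ J) : P.ι (c * d) ∈ J := by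
  have hmem := hJ.mul_mem_right _ hc _ (P.degLT_tpow (k := m - n) (by omega))
  rwa [hmodr.eq_of_eq_mul_add hm (q := P.ι c) _ (P.degLT_ι hm _)] at hmem
  rw [mul_assoc, ← pow_add, Nat.add_sub_cancel' hnm.le, map_mul, mul_sub, sub_add_cancel]

end Ring

theorem mul_ι_eq_of_deg_min [CommRing S] {σ : S →+* S} {P : SkewPolyRing S R σ 0}
    (hJ : P.IsPetitIdeal m modr J) {d : S} (hmodr : P.IsModr (P.t ^ m - P.ι d) m modr)
    (hm : 0 < m) {x : R} (hx : x ∈ J) (hmin : ∀ y ∈ J, y ≠ 0 → P.deg x ≤ P.deg y) (a : S) :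
    x * P.ι a = P.ι (σ^[P.deg x] a) * x := by
  set y := x * P.ι a - P.ι (σ^[P.deg x] a) * x
  have hyJ : y ∈ J := J.sub_mem (hJ.mul_ι_mem hmodr hm hx a) (hJ.ι_mul_mem hmodr hm hx _)
  have hy : P.degLT y (P.deg x) := fun j hj => by
    rw [map_sub, Finsupp.sub_apply, P.coeff_mul_ι, P.coeff_ι_mul]
    rcases hj.eq_or_lt with rfl | hj
    · rw [mul_comm, sub_self]
    · rw [P.coeff_eq_zero_of_deg_lt hj, zero_mul, mul_zero, sub_zero]
  by_cases hy0 : y = 0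
  · exact sub_eq_zero.mp hy0
  · exact absurd (hmin y hyJ hy0) (P.deg_lt_of_degLT hy0 hy).not_ge

end IsPetitIdeal

end SkewPolyRing

theorem AlgEquiv.pow_ne_one_of_lt_finrank {F K : Type*} [Field F] [Field K] [Algebra F K]
    [IsGalois F K] {σ : K ≃ₐ[F] K} (hgen : ∀ τ : K ≃ₐ[F] K, τ ∈ Subgroup.zpowers σ) {k : ℕ}
    (hk0 : 0 < k) (hk : k < Module.finrank F K) : σ ^ k ≠ 1 := by
  have : FiniteDimensional F K := Module.finite_of_finrank_pos (by omega)
  refine pow_ne_one_of_lt_orderOf hk0.ne' ?_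
  rwa [orderOf_eq_card_of_forall_mem_zpowers hgen, IsGalois.card_aut_eq_finrank]

namespace NumberField.RingOfIntegers

variable {F K : Type*} [Field F] [Field K] [NumberField K] [Algebra F K]

theorem exists_ne_of_algEquiv_ne_one {τ : K ≃ₐ[F] K} (hτ : τ ≠ 1) : ∃ x : 𝓞 K, τ x ≠ x := by
  by_contra! h
  apply hτ
  have hext : (τ : K →+* K) = RingHom.id K :=
    IsLocalization.ringHom_ext (nonZeroDivisors (𝓞 K)) (RingHom.ext fun x => h x)
  exact AlgEquiv.ext (RingHom.congr_fun hext)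

theorem exists_iterate_ne {σ : K ≃ₐ[F] K} {σ₀ : 𝓞 K →+* 𝓞 K}
    (hσ₀ : ∀ x : 𝓞 K, (σ₀ x : K) = σ (x : K)) {k : ℕ} (hk : σ ^ k ≠ 1) :
    ∃ x : 𝓞 K, σ₀^[k] x ≠ x := by
  obtain ⟨x, hx⟩ := exists_ne_of_algEquiv_ne_one hk
  refine ⟨x, fun h => hx ?_⟩
  rw [AlgEquiv.coe_pow, ← (Function.Semiconj.iterate_right hσ₀ k) x, h]

end NumberField.RingOfIntegers

open NumberField

theorem ideal_meets_ring_of_integers_general {F K R : Type*} [Field F] [Field K]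
    [NumberField K] [Algebra F K] [IsGalois F K] [Ring R]
    (m : ℕ) (hdeg : Module.finrank F K = m)
    (σ : K ≃ₐ[F] K) (hgen : ∀ τ : K ≃ₐ[F] K, τ ∈ Subgroup.zpowers σ)
    (σ₀ : 𝓞 K →+* 𝓞 K) (hσ₀ : ∀ x : 𝓞 K, (σ₀ x : K) = σ (x : K))
    (d : 𝓞 K) (hd : IsUnit d)
    -- the natural order `Λ`: the Petit algebra of `f = t^m − d` inside `R = O_K[t;σ]`:
    (P : SkewPolyRing (𝓞 K) R σ₀ 0) (f : R)
    (hf : f = P.coeff.symm (Finsupp.single m 1 - Finsupp.single 0 d))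
    (modr : R → R) (hmodr : P.IsModr f m modr)
    -- `J` a nonzero two-sided ideal of `Λ`:
    (J : AddSubgroup R) (hJΛ : ∀ x ∈ J, P.degLT x m)
    (hJl : ∀ x ∈ J, ∀ l : R, P.degLT l m → modr (l * x) ∈ J)
    (hJr : ∀ x ∈ J, ∀ l : R, P.degLT l m → modr (x * l) ∈ J)
    (hJne : ∃ x ∈ J, x ≠ 0) :
    ∃ a : 𝓞 K, a ≠ 0 ∧ P.ι a ∈ J := by
  rw [hf, map_sub, P.symm_single, P.symm_single, map_one, one_mul, pow_zero, mul_one] at hmodr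
  have hJ : P.IsPetitIdeal m modr J := ⟨hJΛ, hJl, hJr⟩
  obtain ⟨x, ⟨hxJ, hx0⟩, hmin⟩ := (measure P.deg).wf.has_min {x | x ∈ J ∧ x ≠ 0} hJne
  set n := P.deg x
  set c := P.coeff x n
  have hnm : n < m := P.deg_lt_of_degLT hx0 (hJ.degLT x hxJ)
  have hσ₀inj : Function.Injective σ₀ :=
    .of_comp (f := ((↑) : 𝓞 K → K)) <| by
      simpa only [Function.comp_def, hσ₀] using σ.injective.comp RingOfIntegers.coe_injective
  have hx : x = P.ι c * P.t ^ n :=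
    P.eq_ι_mul_tpow_of_mul_ι_eq hσ₀inj
      (fun k hk hkn => RingOfIntegers.exists_iterate_ne hσ₀
        (σ.pow_ne_one_of_lt_finrank hgen hk (by omega)))
      (P.degLT_deg_succ x)
      (hJ.mul_ι_eq_of_deg_min hmodr (by omega) hxJ fun y hy hy0 => not_lt.mp (hmin y ⟨hy, hy0⟩))
  have hc : c ≠ 0 := P.coeff_deg_ne_zero hx0
  rcases Nat.eq_zero_or_pos n with hn0 | hn
  · refine ⟨_, hc, ?_⟩
    rwa [hx, hn0, pow_zero, mul_one] at hxJ
  · exact ⟨_, mul_ne_zero hc hd.ne_zero,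
      hJ.ι_mul_mem_of_ι_mul_tpow_mem hmodr (by omega) hn hnm (hx ▸ hxJ)⟩

set_option synthInstance.maxHeartbeats 1000000 in
set_option maxHeartbeats 1000000 in
/-- Let `Λ` be the natural order of a nonassociative cyclic division algebra
`A = (K/F,σ,d)` of degree `m` over a number field `F`, with `d ∈ O_K^×` and
`f = t^m − d` irreducible in `K[t;σ]`.  Then every nonzero two-sided ideal `J` of `Λ`
satisfies `J ∩ O_K ≠ 0`. -/
theorem ideal_meets_ring_of_integers {F K R RK : Type*} [Field F] [Field K]
    [NumberField F] [NumberField K] [Algebra F K] [IsGalois F K] [Ring R] [Ring RK]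
    (m : ℕ) (hm : 2 ≤ m) (hdeg : Module.finrank F K = m)
    (σ : K ≃ₐ[F] K) (hgen : ∀ τ : K ≃ₐ[F] K, τ ∈ Subgroup.zpowers σ)
    (σ₀ : 𝓞 K →+* 𝓞 K) (hσ₀ : ∀ x : 𝓞 K, (σ₀ x : K) = σ (x : K))
    (d : 𝓞 K) (hd : IsUnit d)
    -- `f = t^m − d` is irreducible in `K[t;σ]`, so `A` is a division algebra:
    (σK : K →+* K) (hσK : ∀ x : K, σK x = σ x)
    (PK : SkewPolyRing K RK σK 0)
    (hirr : ¬ ∃ g h : RK, PK.degLT g m ∧ PK.degLT h m ∧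
      PK.coeff.symm (Finsupp.single m 1 - Finsupp.single 0 (d : K)) = g * h)
    -- the natural order `Λ`: the Petit algebra of `f = t^m − d` inside `R = O_K[t;σ]`:
    (P : SkewPolyRing (𝓞 K) R σ₀ 0) (f : R)
    (hf : f = P.coeff.symm (Finsupp.single m 1 - Finsupp.single 0 d))
    (modr : R → R) (hmodr : P.IsModr f m modr)
    -- `J` a nonzero two-sided ideal of `Λ`:
    (J : AddSubgroup R) (hJΛ : ∀ x ∈ J, P.degLT x m)
    (hJl : ∀ x ∈ J, ∀ l : R, P.degLT l m → modr (l * x) ∈ J)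
    (hJr : ∀ x ∈ J, ∀ l : R, P.degLT l m → modr (x * l) ∈ J)
    (hJne : ∃ x ∈ J, x ≠ 0) :
    ∃ a : 𝓞 K, a ≠ 0 ∧ P.ι a ∈ J :=
  ideal_meets_ring_of_integers_general m hdeg σ hgen σ₀ hσ₀ d hd P f hf modr hmodr J hJΛ hJl hJr
    hJne
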